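/- arXiv:1701.05973 — 5 statements merged into one kernel-verified Lean document; each statement's English description precedes it below -/
import Mathlib

section
/- For constants $a > 0$ and $\mu > 0$, the equation $e^{\mu \lambda} = e^{a\mu}(\mu\lambda + 1)$ has a unique positive solution $\lambda$, and this solution satisfies $\lambda > a$. -/
/-!
Substituting `t = μ λ` turns the equation into `exp t / (t + 1) = exp (a μ)`. The left side
equals `1` at `t = 0`, is strictly increasing on `t ≥ 0` and tends to infinity, so it takes the
value `exp (a μ) > 1` at exactly one positive `t`. Any positive solution exceeds `a` because
`exp (μ λ) = exp (a μ) (μ λ + 1) > exp (a μ)`.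
-/

open Real Set Filter

namespace Real

theorem strictMonoOn_exp_div_add_one : StrictMonoOn (fun t => exp t / (t + 1)) (Ici 0) := by
  intro x (hx : 0 ≤ x) y (hy : 0 ≤ y) hxy
  have hgap : y - x + 1 < exp (y - x) := add_one_lt_exp (sub_pos.mpr hxy).ne'
  have hsplit : exp y = exp x * exp (y - x) := by rw [← exp_add, add_sub_cancel]
  rw [div_lt_div_iff₀ (by linarith) (by linarith), hsplit]
  calc exp x * (y + 1) ≤ exp x * ((y - x + 1) * (x + 1)) := by
        gcongr; nlinarith
    _ < exp x * exp (y - x) * (x + 1) := by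
        rw [mul_assoc]; gcongr

theorem tendsto_exp_div_add_one_atTop : Tendsto (fun t => exp t / (t + 1)) atTop atTop := by
  have hhalf : Tendsto (fun t => exp (t / 2) / 2) atTop atTop :=
    (tendsto_exp_atTop.comp (tendsto_id.atTop_div_const two_pos)).atTop_div_const two_pos
  refine tendsto_atTop_mono' atTop ?_ hhalf
  filter_upwards [eventually_ge_atTop 0] with t ht
  -- `t + 1 ≤ 2 (t / 2 + 1) ≤ 2 exp (t / 2)` and `exp t = exp (t / 2) ^ 2`
  have hle : t / 2 + 1 ≤ exp (t / 2) := add_one_le_exp _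
  have hsq : exp t = exp (t / 2) * exp (t / 2) := by rw [← exp_add, add_halves]
  rw [le_div_iff₀ (by linarith), hsq]
  nlinarith [exp_pos (t / 2)]

theorem exists_pos_exp_eq_mul_add_one {c : ℝ} (hc : 1 < c) :
    ∃ t, 0 < t ∧ exp t = c * (t + 1) := by
  have hcont : ContinuousOn (fun t => exp t / (t + 1)) (Ici 0) :=
    continuousOn_exp.div (by fun_prop) fun t (ht : 0 ≤ t) => by linarith
  obtain ⟨t, ht, hval⟩ :=
    intermediate_value_Ioi hcont tendsto_exp_div_add_one_atTop (by simpa using hc)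
  refine ⟨t, ht, ?_⟩
  rwa [div_eq_iff (by linarith [mem_Ioi.mp ht])] at hval

theorem eq_of_exp_eq_mul_add_one {c x y : ℝ} (hx : 0 ≤ x) (hy : 0 ≤ y)
    (hxc : exp x = c * (x + 1)) (hyc : exp y = c * (y + 1)) : x = y := by
  refine strictMonoOn_exp_div_add_one.injOn hx hy ?_
  simp only [hxc, hyc]
  rw [mul_div_cancel_right₀ _ (by linarith), mul_div_cancel_right₀ _ (by linarith)]

theorem lt_of_exp_eq_exp_mul_add_one {s t : ℝ} (ht : 0 < t) (h : exp t = exp s * (t + 1)) :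
    s < t := by
  rw [← exp_lt_exp, h]
  exact lt_mul_of_one_lt_right (exp_pos s) (by linarith)

end Real

/-- For constants `a > 0` and `μ > 0`, the equation `e^{μλ} = e^{aμ}(μλ + 1)` has a
unique positive solution `λ`, and this solution satisfies `λ > a`. -/
theorem stmt_0 (a μ : ℝ) (ha : 0 < a) (hμ : 0 < μ) :
    (∃! lam : ℝ, 0 < lam ∧ Real.exp (μ * lam) = Real.exp (a * μ) * (μ * lam + 1)) ∧
    (∀ lam : ℝ, 0 < lam → Real.exp (μ * lam) = Real.exp (a * μ) * (μ * lam + 1) → a < lam) := by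
  obtain ⟨t, ht, hsol⟩ := exists_pos_exp_eq_mul_add_one (one_lt_exp_iff.mpr (mul_pos ha hμ))
  have hμt : μ * (t / μ) = t := mul_div_cancel₀ t hμ.ne'
  refine ⟨⟨t / μ, ⟨div_pos ht hμ, by rwa [hμt]⟩, ?_⟩, ?_⟩
  · rintro lam ⟨hlam, hlam_sol⟩
    have : μ * lam = t := eq_of_exp_eq_mul_add_one (by positivity) ht.le hlam_sol hsol
    rw [← this, mul_div_cancel_left₀ lam hμ.ne']
  · intro lam hlam hlam_sol
    have h := lt_of_exp_eq_exp_mul_add_one (mul_pos hμ hlam) hlam_sol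
    rw [mul_comm] at h
    exact lt_of_mul_lt_mul_left h hμ.le
end

section
/- Let $a, \mu, t > 0$ and consider the function $g(\ell) = \ell(1 - e^{-\frac{\mu}{\ell}(t - a\ell)})$ on $\ell \in (0, t/a]$. Then $g$ is concave in $\ell$ (its second derivative is $-e^{-\frac{\mu}{\ell}(t-a\ell)} \frac{\mu^2 t^2}{\ell^3} < 0$), and hence the critical point $\ell^* = t/\lambda$, where $\lambda$ solves $e^{\mu\lambda} = e^{a\mu}(\mu\lambda + 1)$, is the global maximizer of $g$. -/
/-!
Write `E(ℓ) = e^{-(μ/ℓ)(t - aℓ)}`; the exponent has derivative `μt/ℓ²`, so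
`g'(ℓ) = 1 - E(ℓ)(1 + μt/ℓ)` and `g''(ℓ) = -E(ℓ) μ²t²/ℓ³`. Hence `g` is strictly concave on the
whole half-line `(0, ∞)`, not only on `(0, t/a]`. At `ℓ = t/λ` we get `E = e^{aμ - μλ}`, which the
equation for `λ` turns into `1/(μλ + 1)`, so `g'(t/λ) = 0`; a critical point of a concave function
is a global maximum.
-/

open Real Set

theorem ConcaveOn.isMaxOn_of_hasDerivAt_eq_zero {S : Set ℝ} {f : ℝ → ℝ} {x : ℝ}
    (hf : ConcaveOn ℝ S f) (hx : x ∈ S) (hf' : HasDerivAt f 0 x) : IsMaxOn f S x := by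
  intro y hy
  rcases lt_trichotomy y x with hyx | rfl | hxy
  · have h := hf.le_slope_of_hasDerivAt hy hx hyx hf'
    rwa [slope_def_field, le_div_iff₀ (sub_pos.2 hyx), zero_mul, sub_nonneg] at h
  · exact le_refl (f y)
  · have h := hf.slope_le_of_hasDerivAt hx hy hxy hf'
    rwa [slope_def_field, div_le_iff₀ (sub_pos.2 hxy), zero_mul, sub_nonpos] at h

theorem hasDerivAt_const_div_id {𝕜 : Type*} [NontriviallyNormedField 𝕜] (c : 𝕜) {x : 𝕜}
    (hx : x ≠ 0) : HasDerivAt (fun y => c / y) (-c / x ^ 2) x :=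
  ((hasDerivAt_const x c).fun_div (hasDerivAt_id' x) hx).congr_deriv (by ring)

noncomputable def expectedInnerProducts (a μ t l : ℝ) : ℝ :=
  l * (1 - exp (-(μ / l) * (t - a * l)))

section
variable {a μ t l : ℝ}

theorem hasDerivAt_expectedInnerProducts_exponent (hl : l ≠ 0) :
    HasDerivAt (fun x => -(μ / x) * (t - a * x)) (μ * t / l ^ 2) l :=
  ((hasDerivAt_const_div_id μ hl).fun_neg.fun_mul
    ((hasDerivAt_const l t).fun_sub ((hasDerivAt_id' l).const_mul a))).congr_deriv
    (by field_simp; ring)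

theorem hasDerivAt_expectedInnerProducts (hl : l ≠ 0) :
    HasDerivAt (expectedInnerProducts a μ t)
      (1 - exp (-(μ / l) * (t - a * l)) * (1 + μ * t / l)) l :=
  ((hasDerivAt_id' l).fun_mul
    ((hasDerivAt_const l 1).fun_sub (hasDerivAt_expectedInnerProducts_exponent hl).exp)).congr_deriv
    (by field_simp; ring)

theorem hasDerivAt_deriv_expectedInnerProducts (hl : l ≠ 0) :
    HasDerivAt (deriv (expectedInnerProducts a μ t))
      (-exp (-(μ / l) * (t - a * l)) * (μ ^ 2 * t ^ 2 / l ^ 3)) l := by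
  have hderiv : deriv (expectedInnerProducts a μ t) =ᶠ[nhds l]
      fun x => 1 - exp (-(μ / x) * (t - a * x)) * (1 + μ * t / x) := by
    filter_upwards [isOpen_ne.mem_nhds hl] with x hx
    exact (hasDerivAt_expectedInnerProducts hx).deriv
  refine HasDerivAt.congr_of_eventuallyEq ?_ hderiv
  exact ((hasDerivAt_const l 1).fun_sub ((hasDerivAt_expectedInnerProducts_exponent hl).exp.fun_mul
    ((hasDerivAt_const l 1).fun_add (hasDerivAt_const_div_id (μ * t) hl)))).congr_deriv
    (by field_simp; ring)

theorem strictConcaveOn_expectedInnerProducts (hμ : μ ≠ 0) (ht : t ≠ 0) :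
    StrictConcaveOn ℝ (Ioi 0) (expectedInnerProducts a μ t) := by
  refine strictConcaveOn_of_deriv2_neg (convex_Ioi 0)
    (fun x hx => (hasDerivAt_expectedInnerProducts hx.ne').continuousAt.continuousWithinAt)
    fun x hx => ?_
  rw [interior_Ioi] at hx
  show deriv (deriv _) x < 0
  rw [(hasDerivAt_deriv_expectedInnerProducts hx.ne').deriv, neg_mul, neg_lt_zero]
  have := hx.out
  positivity

theorem hasDerivAt_expectedInnerProducts_eq_zero {lam : ℝ} (ht : t ≠ 0) (hlam : lam ≠ 0)
    (hlam_eq : exp (μ * lam) = exp (a * μ) * (μ * lam + 1)) :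
    HasDerivAt (expectedInnerProducts a μ t) 0 (t / lam) := by
  refine (hasDerivAt_expectedInnerProducts (div_ne_zero ht hlam)).congr_deriv ?_
  have hexponent : -(μ / (t / lam)) * (t - a * (t / lam)) = a * μ - μ * lam := by
    field_simp; ring
  have hratio : μ * t / (t / lam) = μ * lam := by field_simp
  have hne : μ * lam + 1 ≠ 0 := right_ne_zero_of_mul (hlam_eq ▸ (exp_pos _).ne')
  rw [hexponent, hratio, exp_sub, hlam_eq]
  field_simp
  ring

end

theorem stmt_1_general (a μ t lam : ℝ) (hμ : 0 < μ) (ht : 0 < t)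
    (hlam : 0 < lam)
    (hlam_eq : Real.exp (μ * lam) = Real.exp (a * μ) * (μ * lam + 1)) :
    ConcaveOn ℝ (Set.Ioc 0 (t / a))
      (fun l : ℝ => l * (1 - Real.exp (-(μ / l) * (t - a * l)))) ∧
    (∀ l ∈ Set.Ioo (0 : ℝ) (t / a),
      deriv (deriv (fun l : ℝ => l * (1 - Real.exp (-(μ / l) * (t - a * l))))) l
        = -Real.exp (-(μ / l) * (t - a * l)) * (μ ^ 2 * t ^ 2 / l ^ 3) ∧
      -Real.exp (-(μ / l) * (t - a * l)) * (μ ^ 2 * t ^ 2 / l ^ 3) < 0) ∧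
    (∀ l ∈ Set.Ioc (0 : ℝ) (t / a),
      l * (1 - Real.exp (-(μ / l) * (t - a * l)))
        ≤ (t / lam) * (1 - Real.exp (-(μ / (t / lam)) * (t - a * (t / lam))))) := by
  have hconcave : ConcaveOn ℝ (Ioi 0) (expectedInnerProducts a μ t) :=
    (strictConcaveOn_expectedInnerProducts hμ.ne' ht.ne').concaveOn
  have hmax : IsMaxOn (expectedInnerProducts a μ t) (Ioi 0) (t / lam) :=
    hconcave.isMaxOn_of_hasDerivAt_eq_zero (div_pos ht hlam)
      (hasDerivAt_expectedInnerProducts_eq_zero ht.ne' hlam.ne' hlam_eq)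
  refine ⟨hconcave.subset Ioc_subset_Ioi_self (convex_Ioc 0 (t / a)),
    fun l hl => ⟨(hasDerivAt_deriv_expectedInnerProducts hl.1.ne').deriv, ?_⟩,
    fun l hl => hmax (Ioc_subset_Ioi_self hl)⟩
  have := hl.1
  rw [neg_mul, neg_lt_zero]
  positivity

/-- For `a, μ, t > 0`, the function `g(ℓ) = ℓ(1 - e^{-(μ/ℓ)(t - aℓ)})` is concave on
`(0, t/a]`, its second derivative equals `-e^{-(μ/ℓ)(t-aℓ)} μ² t² / ℓ³ < 0` there, and the
critical point `ℓ* = t/λ`, where `λ` solves `e^{μλ} = e^{aμ}(μλ+1)`, is the global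
maximizer of `g` on `(0, t/a]`. -/
theorem stmt_1 (a μ t lam : ℝ) (ha : 0 < a) (hμ : 0 < μ) (ht : 0 < t)
    (hlam : 0 < lam)
    (hlam_eq : Real.exp (μ * lam) = Real.exp (a * μ) * (μ * lam + 1)) :
    ConcaveOn ℝ (Set.Ioc 0 (t / a))
      (fun l : ℝ => l * (1 - Real.exp (-(μ / l) * (t - a * l)))) ∧
    (∀ l ∈ Set.Ioo (0 : ℝ) (t / a),
      deriv (deriv (fun l : ℝ => l * (1 - Real.exp (-(μ / l) * (t - a * l))))) l
        = -Real.exp (-(μ / l) * (t - a * l)) * (μ ^ 2 * t ^ 2 / l ^ 3) ∧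
      -Real.exp (-(μ / l) * (t - a * l)) * (μ ^ 2 * t ^ 2 / l ^ 3) < 0) ∧
    (∀ l ∈ Set.Ioc (0 : ℝ) (t / a),
      l * (1 - Real.exp (-(μ / l) * (t - a * l)))
        ≤ (t / lam) * (1 - Real.exp (-(μ / (t / lam)) * (t - a * (t / lam))))) :=
  stmt_1_general a μ t lam hμ ht hlam hlam_eq
end

section
/- Suppose each worker $i \in [n]$ has shifted exponential run-time with parameters $a_i, \mu_i > 0$ and is assigned load $\ell_i^*(t) = t/\lambda_i$, where $\lambda_i$ is the positive solution of $e^{\mu_i \lambda_i} = e^{a_i \mu_i}(\mu_i \lambda_i + 1)$. Then the expected aggregate return at time $t$ satisfies $\mathbb{E}[X^*(t)] = \sum_{i=1}^n \ell_i^*(t)\left(1 - e^{-\frac{\mu_i}{\ell_i^*(t)}(t - a_i \ell_i^*(t))}\right) = t \cdot s$, where $s = \sum_{i=1}^n \frac{\mu_i}{1 + \mu_i \lambda_i}$. -/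
open Real

/-!
The defining equation of `λ` says exactly that `1 + μλ = e^{μλ - aμ}`, while with load `ℓ = t/λ`
the exponent of the success probability collapses to `aμ - μλ`. Hence each worker contributes
`(t/λ)(1 - 1/(1 + μλ)) = t μ/(1 + μλ)`, and summing gives `t·s`.
-/

lemma one_add_mul_eq_exp_of_exp_eq {a μ lam : ℝ}
    (h : exp (μ * lam) = exp (a * μ) * (μ * lam + 1)) :
    1 + μ * lam = exp (μ * lam - a * μ) := by
  rw [exp_sub, h]
  field_simp
  ring

lemma neg_div_div_mul_sub_mul_div {a μ lam t : ℝ} (ht : t ≠ 0) (hlam : lam ≠ 0) :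
    -(μ / (t / lam)) * (t - a * (t / lam)) = -(μ * lam - a * μ) := by
  field_simp

lemma div_mul_one_sub_exp_eq_mul_div {a μ lam t : ℝ} (ht : t ≠ 0) (hlam : lam ≠ 0)
    (h : exp (μ * lam) = exp (a * μ) * (μ * lam + 1)) :
    (t / lam) * (1 - exp (-(μ / (t / lam)) * (t - a * (t / lam))))
      = t * (μ / (1 + μ * lam)) := by
  have hexp := one_add_mul_eq_exp_of_exp_eq h
  have hne : 1 + μ * lam ≠ 0 := hexp ▸ (exp_pos _).ne'
  rw [neg_div_div_mul_sub_mul_div ht hlam, exp_neg, ← hexp, inv_eq_one_div, one_sub_div hne,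
    add_sub_cancel_left]
  field_simp

theorem stmt_9_general (n : ℕ) (a μ lam : ℕ → ℝ) (t : ℝ) (ht : 0 < t)
    (hlam : ∀ i < n, 0 < lam i)
    (heq : ∀ i < n, Real.exp (μ i * lam i) = Real.exp (a i * μ i) * (μ i * lam i + 1)) :
    ∑ i ∈ Finset.range n,
        (t / lam i) * (1 - Real.exp (-(μ i / (t / lam i)) * (t - a i * (t / lam i))))
      = t * ∑ i ∈ Finset.range n, μ i / (1 + μ i * lam i) := by
  rw [Finset.mul_sum]
  refine Finset.sum_congr rfl fun i hi => ?_
  have hi : i < n := Finset.mem_range.1 hi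
  exact div_mul_one_sub_exp_eq_mul_div ht.ne' (hlam i hi).ne' (heq i hi)

/-- If each worker `i < n` has shifted exponential parameters `a_i, μ_i > 0` and load
`ℓ_i*(t) = t/λ_i`, where `λ_i` is the positive solution of
`e^{μ_i λ_i} = e^{a_i μ_i}(μ_i λ_i + 1)`, then the expected aggregate return at time
`t > 0` satisfies `∑ ℓ_i*(t)(1 - e^{-(μ_i/ℓ_i*(t))(t - a_i ℓ_i*(t))}) = t·s`, where
`s = ∑ μ_i/(1 + μ_i λ_i)`. -/
theorem stmt_9 (n : ℕ) (a μ lam : ℕ → ℝ) (t : ℝ) (ht : 0 < t)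
    (ha : ∀ i < n, 0 < a i) (hμ : ∀ i < n, 0 < μ i) (hlam : ∀ i < n, 0 < lam i)
    (heq : ∀ i < n, Real.exp (μ i * lam i) = Real.exp (a i * μ i) * (μ i * lam i + 1)) :
    ∑ i ∈ Finset.range n,
        (t / lam i) * (1 - Real.exp (-(μ i / (t / lam i)) * (t - a i * (t / lam i))))
      = t * ∑ i ∈ Finset.range n, μ i / (1 + μ i * lam i) :=
  stmt_9_general n a μ lam t ht hlam heq
end

section
/- For constants $a, \mu, \alpha > 0$, the equation $e^{\mu^{\alpha}(\lambda - a)^{\alpha}} = 1 + \alpha\mu^{\alpha}\lambda(\lambda - a)^{\alpha - 1}$, considered for $\lambda > a$, has a solution, and for any such solution $\lambda$ one has $\frac{1}{\lambda}\left(1 - e^{-(\mu\lambda(1 - a/\lambda))^{\alpha}}\right) = \frac{\alpha\mu^{\alpha}(\lambda - a)^{\alpha - 1}}{1 + \alpha\mu^{\alpha}\lambda(\lambda - a)^{\alpha - 1}}$. -/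
open Real Filter Set Topology

/-!
Write `t = λ - a` and `x = μ^α t^α`; after multiplying by `t` the equation reads
`t (eˣ - 1) = α (a + t) x`. As `t → 0⁺` the right side dominates, because `eˣ - 1 ≤ x eˣ` and
`t eˣ → 0`; as `t → ∞` the left side dominates, because `eˣ - 1 ≥ x² / 2`. The intermediate value
theorem gives a root. At a root `e^{-x}` is the reciprocal of `1 + α μ^α λ (λ - a)^{α-1}`, and the
identity is algebra.
-/

lemma exp_sub_one_le_mul_exp (x : ℝ) : exp x - 1 ≤ x * exp x := by
  have h := mul_le_mul_of_nonneg_right (add_one_le_exp (-x)) (exp_pos x).le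
  rw [← exp_add, neg_add_cancel, exp_zero] at h
  linarith

section FirstOrderCondition

variable {a c α : ℝ}

lemma exists_exp_sub_one_lt (ha : 0 < a) (hc : 0 < c) (hα : 0 < α) :
    ∃ t > 0, exp (c * t ^ α) - 1 < α * c * (a + t) * t ^ (α - 1) := by
  have hcont : ContinuousAt (fun t : ℝ => t * exp (c * t ^ α)) 0 := by
    fun_prop (disch := exact Or.inr hα.le)
  have hsmall : ∀ᶠ t in 𝓝[>] (0 : ℝ), 0 < t ∧ t * exp (c * t ^ α) < α * a := by
    refine eventually_mem_nhdsWithin.and (nhdsWithin_le_nhds ?_)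
    refine hcont.eventually (gt_mem_nhds ?_)
    simp [zero_rpow hα.ne', mul_pos hα ha]
  obtain ⟨t, ht, hbound⟩ := hsmall.exists
  refine ⟨t, ht, ?_⟩
  have hpow : c * t ^ α = c * t ^ (α - 1) * t := by
    rw [rpow_sub_one ht.ne']; field_simp
  calc exp (c * t ^ α) - 1 ≤ c * t ^ α * exp (c * t ^ α) := exp_sub_one_le_mul_exp _
    _ = c * t ^ (α - 1) * (t * exp (c * t ^ α)) := by rw [hpow]; ring
    _ < c * t ^ (α - 1) * (α * a) := by gcongr
    _ ≤ α * c * (a + t) * t ^ (α - 1) := by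
      have : 0 < c * t ^ (α - 1) * α := by positivity
      nlinarith

lemma exists_lt_exp_sub_one (hc : 0 < c) (hα : 0 < α) :
    ∃ t > 0, α * c * (a + t) * t ^ (α - 1) < exp (c * t ^ α) - 1 := by
  have hlarge : ∀ᶠ t in atTop, 1 ≤ t ∧ 2 * α * (|a| + 1) ≤ c * t ^ α :=
    (eventually_ge_atTop 1).and
      (((tendsto_rpow_atTop hα).const_mul_atTop hc).eventually_ge_atTop _)
  obtain ⟨t, ht, hx⟩ := hlarge.exists
  refine ⟨t, by linarith, ?_⟩
  set x := c * t ^ α with hx_def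
  have hx0 : 0 < x := by positivity
  have hlin : a + t ≤ (|a| + 1) * t := by nlinarith [le_abs_self a, abs_nonneg a]
  have hpow : α * c * (a + t) * t ^ (α - 1) * t = α * x * (a + t) := by
    rw [rpow_sub_one (by linarith), hx_def]; field_simp
  have hlhs : α * c * (a + t) * t ^ (α - 1) ≤ α * (|a| + 1) * x := by
    refine le_of_mul_le_mul_right ?_ (by linarith : (0 : ℝ) < t)
    rw [hpow]
    have : 0 ≤ α * x := by positivity
    nlinarith
  nlinarith [quadratic_le_exp_of_nonneg hx0.le]

theorem exists_exp_rpow_eq_one_add (ha : 0 < a) (hc : 0 < c) (hα : 0 < α) :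
    ∃ lam, a < lam ∧ exp (c * (lam - a) ^ α) = 1 + α * c * lam * (lam - a) ^ (α - 1) := by
  set f : ℝ → ℝ := fun t => exp (c * t ^ α) - 1 - α * c * (a + t) * t ^ (α - 1)
  obtain ⟨t₀, ht₀, hf₀⟩ := exists_exp_sub_one_lt ha hc hα
  obtain ⟨t₁, ht₁, hf₁⟩ := exists_lt_exp_sub_one (a := a) hc hα
  have hf : ContinuousOn f (Ioi 0) := by
    intro t ht
    have : t ≠ 0 := (mem_Ioi.mp ht).ne'
    fun_prop (disch := exact Or.inl this)
  obtain ⟨t, ht, hft⟩ : (0 : ℝ) ∈ f '' Ioi 0 :=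
    isPreconnected_Ioi.intermediate_value ht₀ ht₁ hf
      ⟨by simp only [f]; linarith, by simp only [f]; linarith⟩
  refine ⟨a + t, by linarith [mem_Ioi.mp ht], ?_⟩
  simp only [f, add_sub_cancel_left] at hft ⊢
  linarith

end FirstOrderCondition

/-- For constants `a, μ, α > 0`, the equation
`e^{μ^α (λ-a)^α} = 1 + α μ^α λ (λ-a)^{α-1}`, considered for `λ > a`, has a solution,
and any such solution satisfies
`(1/λ)(1 - e^{-(μλ(1 - a/λ))^α}) = α μ^α (λ-a)^{α-1} / (1 + α μ^α λ (λ-a)^{α-1})`. -/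
theorem stmt_11 (a μ α : ℝ) (ha : 0 < a) (hμ : 0 < μ) (hα : 0 < α) :
    (∃ lam : ℝ, a < lam ∧
      Real.exp (μ ^ α * (lam - a) ^ α) = 1 + α * μ ^ α * lam * (lam - a) ^ (α - 1)) ∧
    (∀ lam : ℝ, a < lam →
      Real.exp (μ ^ α * (lam - a) ^ α) = 1 + α * μ ^ α * lam * (lam - a) ^ (α - 1) →
      (1 / lam) * (1 - Real.exp (-(μ * lam * (1 - a / lam)) ^ α))
        = α * μ ^ α * (lam - a) ^ (α - 1) / (1 + α * μ ^ α * lam * (lam - a) ^ (α - 1))) := by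
  refine ⟨exists_exp_rpow_eq_one_add ha (rpow_pos_of_pos hμ α) hα, fun lam hlam heq => ?_⟩
  have hlam0 : lam ≠ 0 := (ha.trans hlam).ne'
  have hE : 1 + α * μ ^ α * lam * (lam - a) ^ (α - 1) ≠ 0 := heq ▸ (exp_pos _).ne'
  have hbase : μ * lam * (1 - a / lam) = μ * (lam - a) := by field_simp
  rw [hbase, mul_rpow hμ.le (sub_nonneg.2 hlam.le), exp_neg, heq, inv_eq_one_div, one_sub_div hE]
  field_simp
  ring
end

section
/- Suppose for each worker $i \in [n]$ the run-time $T_i$ with load $\ell_i^*(t) = t/\lambda_i$ is shifted exponential with parameters $a_i, \mu_i$, where $\lambda_i > a_i$ solves $e^{\mu_i \lambda_i} = e^{a_i\mu_i}(\mu_i\lambda_i + 1)$, and suppose $a_i, \mu_i, \lambda_i$ are bounded above and below by positive constants independent of $n$. Let $s = \sum_i \mu_i/(1 + \mu_i \lambda_i)$, $r$ with $r = \Theta(n)$, $\tau^* = r/s$, and let $t = \tau^* + \delta$ with $\delta = \Theta(\log n / \sqrt{n})$. Then $\Pr[X^*(t) \le r - \delta^2] \le e^{-c n \delta^2}$ for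 some constant $c > 0$ and sufficiently large $n$; in particular $\Pr[X^*(t) < r] = o(1/n)$. -/
/-!
The aggregate return `X*(t)` is a sum of independent variables `Xᵢ ∈ {0, ℓᵢ}` with
`ℓᵢ = t / λᵢ`. The fixed-point equation for `λᵢ` makes `P[Tᵢ ≤ t] = μᵢλᵢ / (1 + μᵢλᵢ)`, so
`E[X*(t)] = t s = r + δ s`. Hoeffding's inequality bounds the lower tail by
`exp (-2 (δ s)² / ∑ ℓᵢ²)`, and since `s = Θ(n)` while every `ℓᵢ = O(1)`, the exponent is of
order `n δ²`. Finally `n δ² ≳ (log n)²`, so `n · exp (-c (log n)²) → 0`.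
-/

open MeasureTheory ProbabilityTheory Real Filter

theorem log_div_sqrt_le_two (x : ℝ) : log x / √x ≤ 2 := by
  rcases le_or_gt x 0 with hx | hx
  · simp [sqrt_eq_zero'.2 hx]
  rw [div_le_iff₀ (sqrt_pos.2 hx), sqrt_eq_rpow]
  linarith [log_le_rpow_div hx.le one_half_pos]

theorem eventually_bounds_of_le_log_div_sqrt {δ : ℕ → ℝ} {c₅ c₆ : ℝ} (hc₅ : 0 ≤ c₅)
    (hc₆ : 0 ≤ c₆)
    (h : ∀ᶠ n : ℕ in atTop, c₅ * log n / √n ≤ δ n ∧ δ n ≤ c₆ * log n / √n) :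
    ∀ᶠ n : ℕ in atTop, 0 ≤ δ n ∧ δ n ≤ 2 * c₆ ∧ c₅ ^ 2 * log n ^ 2 ≤ n * δ n ^ 2 := by
  filter_upwards [h, eventually_gt_atTop 0] with n ⟨hlow, hup⟩ hn
  have hn' : (0 : ℝ) < n := Nat.cast_pos.2 hn
  have hlow0 : 0 ≤ c₅ * log n / √n :=
    div_nonneg (mul_nonneg hc₅ (log_natCast_nonneg n)) (sqrt_nonneg _)
  refine ⟨hlow0.trans hlow, hup.trans ?_, ?_⟩
  · rw [mul_div_assoc, mul_comm 2]
    exact mul_le_mul_of_nonneg_left (log_div_sqrt_le_two n) hc₆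
  · have hsq := pow_le_pow_left₀ hlow0 hlow 2
    rw [div_pow, mul_pow, sq_sqrt hn'.le, div_le_iff₀ hn'] at hsq
    linarith

theorem tendsto_natCast_mul_exp_neg_mul_log_sq {K : ℝ} (hK : 0 < K) :
    Tendsto (fun n : ℕ ↦ n * exp (-(K * log n ^ 2))) atTop (nhds 0) := by
  have hpoly : Tendsto (fun x : ℝ ↦ x - K * x ^ 2) atTop atBot := by
    refine tendsto_atBot_mono' atTop ?_ tendsto_neg_atTop_atBot
    filter_upwards [eventually_ge_atTop (2 / K)] with x hx
    have : 2 ≤ x * K := (div_le_iff₀ hK).1 hx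
    nlinarith
  refine (tendsto_exp_atBot.comp (hpoly.comp
    (tendsto_log_atTop.comp tendsto_natCast_atTop_atTop))).congr' ?_
  filter_upwards [eventually_gt_atTop 0] with n hn
  simp only [Function.comp_apply]
  rw [sub_eq_add_neg, exp_add, exp_log (Nat.cast_pos.2 hn)]

theorem mul_card_le_sum_div_one_add_mul {ι : Type*} {s : Finset ι} {μ lam : ι → ℝ}
    {c₁ c₂ : ℝ} (hc₁ : 0 < c₁)
    (h : ∀ i ∈ s, c₁ ≤ μ i ∧ μ i ≤ c₂ ∧ c₁ ≤ lam i ∧ lam i ≤ c₂) :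
    c₁ / (1 + c₂ ^ 2) * s.card ≤ ∑ i ∈ s, μ i / (1 + μ i * lam i) := by
  rw [mul_comm, ← nsmul_eq_mul]
  refine Finset.card_nsmul_le_sum _ _ _ fun i hi ↦ ?_
  obtain ⟨hμ₁, hμ₂, hl₁, hl₂⟩ := h i hi
  have hμ0 : 0 ≤ μ i := hc₁.le.trans hμ₁
  have hl0 : 0 ≤ lam i := hc₁.le.trans hl₁
  refine div_le_div₀ hμ0 hμ₁ (by positivity) ?_
  nlinarith [mul_le_mul hμ₂ hl₂ hl0 (hμ0.trans hμ₂)]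

theorem exp_neg_mul_sub_eq_inv {a μ lam : ℝ}
    (h : exp (μ * lam) = exp (a * μ) * (μ * lam + 1)) :
    exp (-(μ * (lam - a))) = (1 + μ * lam)⁻¹ := by
  rw [exp_neg, show μ * (lam - a) = μ * lam - a * μ by ring, exp_sub, h,
    mul_div_cancel_left₀ _ (exp_ne_zero _), add_comm]

section

variable {Ω ι : Type*} [MeasurableSpace Ω] {P : Measure Ω}

theorem measureReal_sum_le_sum_integral_sub_le [IsProbabilityMeasure P] {Y : ι → Ω → ℝ}
    (hmeas : ∀ i, Measurable (Y i)) (hindep : iIndepFun Y P) {s : Finset ι} {a b : ι → ℝ}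
    (hY : ∀ i ∈ s, ∀ᵐ ω ∂P, Y i ω ∈ Set.Icc (a i) (b i)) {ε : ℝ} (hε : 0 ≤ ε) :
    P.real {ω | ∑ i ∈ s, Y i ω ≤ ∑ i ∈ s, P[Y i] - ε} ≤
      exp (-2 * ε ^ 2 / ∑ i ∈ s, (b i - a i) ^ 2) := by
  have hsubG : ∀ i ∈ s, HasSubgaussianMGF (fun ω ↦ -Y i ω - P[-Y i])
      ((‖-a i - -b i‖₊ / 2) ^ 2) P := fun i hi ↦
    hasSubgaussianMGF_of_mem_Icc (hmeas i).neg.aemeasurable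
      (by filter_upwards [hY i hi] with ω hω using ⟨neg_le_neg hω.2, neg_le_neg hω.1⟩)
  have hindep' : iIndepFun (fun i ω ↦ -Y i ω - P[-Y i]) P := by
    exact hindep.comp (fun i x ↦ -x - P[-Y i]) fun i ↦ by fun_prop
  have hset : {ω | ∑ i ∈ s, Y i ω ≤ ∑ i ∈ s, P[Y i] - ε} =
      {ω | ε ≤ ∑ i ∈ s, (-Y i ω - P[-Y i])} := by
    ext ω
    simp only [Set.mem_ofPred_eq, Pi.neg_apply, integral_neg, Finset.sum_sub_distrib,
      Finset.sum_neg_distrib]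
    constructor <;> intro h <;> linarith
  have hvar : ((∑ i ∈ s, (‖-a i - -b i‖₊ / 2) ^ 2 : NNReal) : ℝ) =
      (∑ i ∈ s, (b i - a i) ^ 2) / 4 := by
    push_cast
    rw [Finset.sum_div]
    refine Finset.sum_congr rfl fun i _ ↦ ?_
    rw [Real.norm_eq_abs, div_pow, sq_abs]
    ring
  rw [hset]
  refine (HasSubgaussianMGF.measure_sum_ge_le_of_iIndepFun hindep' hsubG hε).trans_eq ?_
  rw [hvar]
  congr 1
  ring

theorem measureReal_sum_ite_le_sum_sub_le [IsProbabilityMeasure P] {T : ι → Ω → ℝ}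
    (hmeas : ∀ i, Measurable (T i)) (hindep : iIndepFun T P) {s : Finset ι} {t : ℝ}
    {ℓ : ι → ℝ} (hℓ : ∀ i ∈ s, 0 ≤ ℓ i) {ε : ℝ} (hε : 0 ≤ ε) :
    P.real {ω | ∑ i ∈ s, (if T i ω ≤ t then ℓ i else 0) ≤
        ∑ i ∈ s, P.real {ω | T i ω ≤ t} * ℓ i - ε} ≤
      exp (-2 * ε ^ 2 / ∑ i ∈ s, ℓ i ^ 2) := by
  have hmeasY : ∀ i, Measurable fun ω ↦ if T i ω ≤ t then ℓ i else 0 := fun i ↦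
    Measurable.ite (measurableSet_le (hmeas i) measurable_const) measurable_const
      measurable_const
  have hindepY : iIndepFun (fun i ω ↦ if T i ω ≤ t then ℓ i else 0) P := by
    exact hindep.comp (fun i x ↦ if x ≤ t then ℓ i else 0) fun i ↦
      Measurable.ite (measurableSet_le measurable_id measurable_const) measurable_const
        measurable_const
  have hmean : ∀ i, P[fun ω ↦ if T i ω ≤ t then ℓ i else 0] =
      P.real {ω | T i ω ≤ t} * ℓ i := by
    intro i
    rw [← smul_eq_mul, ← integral_indicator_const _ (measurableSet_le (hmeas i) measurable_const)]
    rfl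
  have h := measureReal_sum_le_sum_integral_sub_le hmeasY hindepY (s := s)
    (a := fun _ ↦ 0) (b := ℓ)
    (fun i hi ↦ ae_of_all _ fun ω ↦ by split_ifs <;> simp [hℓ i hi]) hε
  simpa only [hmean, sub_zero] using h

theorem measureReal_le_mul_div_eq {T : Ω → ℝ} {a μ lam t : ℝ} (ht : 0 < t) (hμ : 0 ≤ μ)
    (hlam : 0 < lam) (hfix : exp (μ * lam) = exp (a * μ) * (μ * lam + 1))
    (hcdf : P {ω | T ω ≤ t} =
      ENNReal.ofReal (1 - exp (-(μ / (t / lam)) * (t - a * (t / lam))))) :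
    P.real {ω | T ω ≤ t} * (t / lam) = t * (μ / (1 + μ * lam)) := by
  have harg : -(μ / (t / lam)) * (t - a * (t / lam)) = -(μ * (lam - a)) := by
    field_simp
  have hden : 1 ≤ 1 + μ * lam := by nlinarith
  rw [measureReal_def, hcdf, harg, exp_neg_mul_sub_eq_inv hfix,
    ENNReal.toReal_ofReal (sub_nonneg.2 (inv_le_one_of_one_le₀ hden))]
  field_simp
  ring

noncomputable def aggregateReturn (T : ℕ → Ω → ℝ) (lam : ℕ → ℝ) (n : ℕ) (t : ℝ) (ω : Ω) : ℝ :=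
  ∑ i ∈ Finset.range n, if T i ω ≤ t then t / lam i else 0

variable [IsProbabilityMeasure P] {T : ℕ → Ω → ℝ} {a μ lam : ℕ → ℝ} {n : ℕ}

theorem measureReal_aggregateReturn_le_sub_le (hmeas : ∀ i, Measurable (T i))
    (hindep : iIndepFun T P) (hn : 0 < n) {t τ c₁ ε : ℝ} (ht : 0 < t) (htτ : t ≤ τ)
    (hc₁ : 0 < c₁) (hμ : ∀ i < n, 0 ≤ μ i) (hlam : ∀ i < n, c₁ ≤ lam i)
    (hfix : ∀ i < n, a i < lam i ∧ exp (μ i * lam i) = exp (a i * μ i) * (μ i * lam i + 1))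
    (hcdf : ∀ i < n, ∀ u : ℝ, a i * (t / lam i) ≤ u →
      P {ω | T i ω ≤ u} =
        ENNReal.ofReal (1 - exp (-(μ i / (t / lam i)) * (u - a i * (t / lam i)))))
    (hε : 0 ≤ ε) :
    P.real {ω | aggregateReturn T lam n t ω ≤
        t * ∑ i ∈ Finset.range n, μ i / (1 + μ i * lam i) - ε} ≤
      exp (-2 * ε ^ 2 / (n * (τ / c₁) ^ 2)) := by
  have hlam0 : ∀ i < n, 0 < lam i := fun i hi ↦ hc₁.trans_le (hlam i hi)
  have hload : ∀ i < n, 0 < t / lam i ∧ t / lam i ≤ τ / c₁ := fun i hi ↦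
    ⟨div_pos ht (hlam0 i hi), div_le_div₀ (ht.le.trans htτ) htτ hc₁ (hlam i hi)⟩
  have hmean : t * ∑ i ∈ Finset.range n, μ i / (1 + μ i * lam i) =
      ∑ i ∈ Finset.range n, P.real {ω | T i ω ≤ t} * (t / lam i) := by
    rw [Finset.mul_sum]
    refine Finset.sum_congr rfl fun i hi ↦ ?_
    rw [Finset.mem_range] at hi
    have hat : a i * (t / lam i) ≤ t :=
      calc a i * (t / lam i) ≤ lam i * (t / lam i) :=
            mul_le_mul_of_nonneg_right (hfix i hi).1.le (hload i hi).1.le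
        _ = t := mul_div_cancel₀ _ (hlam0 i hi).ne'
    exact (measureReal_le_mul_div_eq ht (hμ i hi) (hlam0 i hi) (hfix i hi).2
      (hcdf i hi t hat)).symm
  have hvar_pos : 0 < ∑ i ∈ Finset.range n, (t / lam i) ^ 2 :=
    Finset.sum_pos (fun i hi ↦ pow_pos (hload i (Finset.mem_range.1 hi)).1 2)
      (Finset.nonempty_range_iff.2 hn.ne')
  have hvar_le : ∑ i ∈ Finset.range n, (t / lam i) ^ 2 ≤ n * (τ / c₁) ^ 2 := by
    simpa using Finset.sum_le_card_nsmul _ _ _ fun i hi ↦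
      pow_le_pow_left₀ (hload i (Finset.mem_range.1 hi)).1.le
        (hload i (Finset.mem_range.1 hi)).2 2
  calc _ ≤ exp (-2 * ε ^ 2 / ∑ i ∈ Finset.range n, (t / lam i) ^ 2) := by
        rw [hmean]
        exact measureReal_sum_ite_le_sum_sub_le hmeas hindep
          (fun i hi ↦ (hload i (Finset.mem_range.1 hi)).1.le) hε
    _ ≤ exp (-2 * ε ^ 2 / (n * (τ / c₁) ^ 2)) := by
        simp only [neg_mul, neg_div, exp_le_exp, neg_le_neg_iff]
        gcongr

theorem measureReal_aggregateReturn_le_le_exp (hmeas : ∀ i, Measurable (T i))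
    (hindep : iIndepFun T P) (hn : 0 < n) {c₁ α c₄ D r δ t : ℝ} (hc₁ : 0 < c₁) (hα : 0 < α)
    (hμ : ∀ i < n, 0 ≤ μ i) (hlam : ∀ i < n, c₁ ≤ lam i)
    (hfix : ∀ i < n, a i < lam i ∧ exp (μ i * lam i) = exp (a i * μ i) * (μ i * lam i + 1))
    (hs : α * n ≤ ∑ i ∈ Finset.range n, μ i / (1 + μ i * lam i))
    (hr : 0 < r) (hr' : r ≤ c₄ * n) (hδ : 0 ≤ δ) (hδD : δ ≤ D)
    (ht : t = r / ∑ i ∈ Finset.range n, μ i / (1 + μ i * lam i) + δ)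
    (hcdf : ∀ i < n, ∀ u : ℝ, a i * (t / lam i) ≤ u →
      P {ω | T i ω ≤ u} =
        ENNReal.ofReal (1 - exp (-(μ i / (t / lam i)) * (u - a i * (t / lam i))))) :
    P.real {ω | aggregateReturn T lam n t ω ≤ r} ≤
      exp (-(2 * (α * c₁ / (c₄ / α + D)) ^ 2 * n * δ ^ 2)) := by
  set s := ∑ i ∈ Finset.range n, μ i / (1 + μ i * lam i)
  have hn' : (0 : ℝ) < n := Nat.cast_pos.2 hn
  have hs0 : 0 < s := (mul_pos hα hn').trans_le hs
  have ht0 : 0 < t := ht ▸ add_pos_of_pos_of_nonneg (div_pos hr hs0) hδ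
  have htτ : t ≤ c₄ / α + D := by
    have : r / s ≤ c₄ / α := by
      rw [div_le_div_iff₀ hs0 hα]
      nlinarith
    linarith
  have hr_eq : r = t * s - δ * s := by
    rw [ht]
    field_simp
    ring
  calc _ ≤ exp (-2 * (δ * s) ^ 2 / (n * ((c₄ / α + D) / c₁) ^ 2)) := by
        rw [hr_eq]
        exact measureReal_aggregateReturn_le_sub_le hmeas hindep hn ht0 htτ hc₁ hμ hlam hfix
          hcdf (mul_nonneg hδ hs0.le)
    _ ≤ exp (-(2 * (α * c₁ / (c₄ / α + D)) ^ 2 * n * δ ^ 2)) := by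
        rw [exp_le_exp, neg_mul, neg_div, neg_le_neg_iff]
        calc 2 * (α * c₁ / (c₄ / α + D)) ^ 2 * n * δ ^ 2
            = 2 * (δ * (α * n)) ^ 2 / (n * ((c₄ / α + D) / c₁) ^ 2) := by
              field_simp
          _ ≤ 2 * (δ * s) ^ 2 / (n * ((c₄ / α + D) / c₁) ^ 2) := by gcongr

end

/-- For each cluster size `n`, worker `i < n` has shifted exponential run-time `T n i`
with parameters `a n i, μ n i` under load `ℓ_i*(t n) = t n / λ n i`, where
`λ n i > a n i` solves `e^{μλ} = e^{aμ}(μλ + 1)` and all parameters are bounded above and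
below by positive constants independent of `n`. With `s n = ∑ μ/(1+μλ)`, `r n = Θ(n)`,
`τ* n = r n / s n`, `δ n = Θ(log n/√n)`, and `t n = τ* n + δ n`, the aggregate return
`X* n = ∑_{i<n} ℓ_i*(t n) 1{T n i ≤ t n}` satisfies
`P[X* n ≤ r n - δ n²] ≤ e^{-c n δ n²}` for some `c > 0` and large `n`; in particular
`P[X* n < r n] = o(1/n)`. -/
theorem stmt_15 {Ω : Type*} [MeasurableSpace Ω] (P : Measure Ω) [IsProbabilityMeasure P]
    (T : ℕ → ℕ → Ω → ℝ) (hmeas : ∀ n i, Measurable (T n i))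
    (a μ lam : ℕ → ℕ → ℝ) (r δ s t : ℕ → ℝ) (X : ℕ → Ω → ℝ)
    (hbdd : ∃ c₁ c₂ : ℝ, 0 < c₁ ∧ ∀ n : ℕ, ∀ i < n,
      c₁ ≤ a n i ∧ a n i ≤ c₂ ∧ c₁ ≤ μ n i ∧ μ n i ≤ c₂ ∧ c₁ ≤ lam n i ∧ lam n i ≤ c₂)
    (hlam : ∀ n : ℕ, ∀ i < n, a n i < lam n i ∧
      Real.exp (μ n i * lam n i) = Real.exp (a n i * μ n i) * (μ n i * lam n i + 1))
    (hr : ∃ c₃ c₄ : ℝ, 0 < c₃ ∧ 0 < c₄ ∧ ∀ n : ℕ, 1 ≤ n →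
      c₃ * n ≤ r n ∧ r n ≤ c₄ * n)
    (hδ : ∃ c₅ c₆ : ℝ, 0 < c₅ ∧ 0 < c₆ ∧ ∀ᶠ n : ℕ in Filter.atTop,
      c₅ * Real.log n / Real.sqrt n ≤ δ n ∧ δ n ≤ c₆ * Real.log n / Real.sqrt n)
    (hs : ∀ n : ℕ, s n = ∑ i ∈ Finset.range n, μ n i / (1 + μ n i * lam n i))
    (ht : ∀ n : ℕ, t n = r n / s n + δ n)
    (hindep : ∀ n : ℕ, iIndepFun (T n) P)
    (hcdf : ∀ n : ℕ, 1 ≤ n → ∀ i < n, ∀ u : ℝ, a n i * (t n / lam n i) ≤ u →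
      P {ω | T n i ω ≤ u} =
        ENNReal.ofReal (1 - Real.exp (-(μ n i / (t n / lam n i)) * (u - a n i * (t n / lam n i)))))
    (hX : ∀ n : ℕ, ∀ ω : Ω,
      X n ω = ∑ i ∈ Finset.range n, if T n i ω ≤ t n then t n / lam n i else 0) :
    (∃ c : ℝ, 0 < c ∧ ∀ᶠ n : ℕ in Filter.atTop,
      (P {ω | X n ω ≤ r n - (δ n) ^ 2}).toReal ≤ Real.exp (-(c * n * (δ n) ^ 2))) ∧
    Filter.Tendsto (fun n : ℕ => (n : ℝ) * (P {ω | X n ω < r n}).toReal)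
      Filter.atTop (nhds 0) := by
  obtain ⟨c₁, c₂, hc₁, hb⟩ := hbdd
  obtain ⟨c₃, c₄, hc₃, hc₄, hrb⟩ := hr
  obtain ⟨c₅, c₆, hc₅, hc₆, hδb⟩ := hδ
  set α := c₁ / (1 + c₂ ^ 2)
  set c := 2 * (α * c₁ / (c₄ / α + 2 * c₆)) ^ 2
  have hc : 0 < c := by positivity
  have key : ∀ᶠ n : ℕ in atTop, P.real {ω | X n ω ≤ r n} ≤ exp (-(c * n * δ n ^ 2)) ∧
      c₅ ^ 2 * log n ^ 2 ≤ n * δ n ^ 2 := by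
    filter_upwards [eventually_bounds_of_le_log_div_sqrt hc₅.le hc₆.le hδb,
      eventually_ge_atTop 1] with n ⟨hδ0, hδD, hδlog⟩ hn
    have hsα : α * n ≤ ∑ i ∈ Finset.range n, μ n i / (1 + μ n i * lam n i) := by
      simpa using
        mul_card_le_sum_div_one_add_mul hc₁ fun i hi ↦ (hb n i (Finset.mem_range.1 hi)).2.2
    obtain ⟨hr₁, hr₂⟩ := hrb n hn
    have hXn : X n = aggregateReturn (T n) (lam n) n (t n) := funext (hX n)
    refine ⟨?_, hδlog⟩
    rw [hXn]
    exact measureReal_aggregateReturn_le_le_exp (hmeas n) (hindep n) hn hc₁ (by positivity)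
      (fun i hi ↦ hc₁.le.trans (hb n i hi).2.2.1) (fun i hi ↦ (hb n i hi).2.2.2.2.1) (hlam n)
      hsα ((mul_pos hc₃ (Nat.cast_pos.2 hn)).trans_le hr₁) hr₂ hδ0 hδD
      (hs n ▸ ht n) (hcdf n hn)
  refine ⟨⟨c, hc, key.mono fun n hn ↦ (measureReal_mono fun ω hω ↦ ?_).trans hn.1⟩, ?_⟩
  · exact hω.out.trans (sub_le_self _ (sq_nonneg _))
  refine squeeze_zero' (Eventually.of_forall fun n ↦ by positivity) ?_
    (tendsto_natCast_mul_exp_neg_mul_log_sq (K := c * c₅ ^ 2) (by positivity))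
  filter_upwards [key] with n hn
  gcongr n * ?_
  calc P.real {ω | X n ω < r n} ≤ P.real {ω | X n ω ≤ r n} :=
        measureReal_mono fun ω (hω : X n ω < r n) ↦ hω.le
    _ ≤ exp (-(c * n * δ n ^ 2)) := hn.1
    _ ≤ exp (-(c * c₅ ^ 2 * log n ^ 2)) := by
        rw [exp_le_exp, neg_le_neg_iff]
        linarith [mul_le_mul_of_nonneg_left hn.2 hc.le]
end
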